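/- Let a_n be the number of ordered set partitions of [n] that word-avoid 213 and have no min-descents (mindes = 0), with a_0 = 1. Then a_n satisfies the recurrence a_n = 3a_{n-1} - a_{n-2} for n ≥ 3, with a_1 = 1 and a_2 = 2; equivalently a_n = F_{2n-1}, a bisection of the Fibonacci numbers. -/

import Mathlib

/-- The word of an ordered set partition: concatenate the blocks,
listing the elements of each block in increasing order. -/
def word (π : List (Finset ℕ)) : List ℕ :=
  (π.map (fun B : Finset ℕ => Finset.sort B (· ≤ ·))).flatten

/-- `π` is an ordered set partition of `[n] = {1,…,n}`: a list of nonempty,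
pairwise disjoint finsets whose union is `{1,…,n}`. -/
def IsOSP (n : ℕ) (π : List (Finset ℕ)) : Prop :=
  (∀ B ∈ π, B.Nonempty) ∧ π.Pairwise Disjoint ∧
    π.foldr (· ∪ ·) ∅ = Finset.Icc 1 n

noncomputable def minB (B : Finset ℕ) : ℕ := sInf (B : Set ℕ)
def maxB (B : Finset ℕ) : ℕ := B.sup id

/-- number of descents of a word -/
def desCount (w : List ℕ) : ℕ :=
  ((List.range (w.length - 1)).filter (fun i => w.getD (i + 1) 0 < w.getD i 0)).length

noncomputable def mindes (π : List (Finset ℕ)) : ℕ :=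
  ((List.range (π.length - 1)).filter
    (fun i => minB (π.getD (i + 1) ∅) < minB (π.getD i ∅))).length

def maxdes (π : List (Finset ℕ)) : ℕ :=
  ((List.range (π.length - 1)).filter
    (fun i => maxB (π.getD (i + 1) ∅) < maxB (π.getD i ∅))).length

noncomputable def pdes (π : List (Finset ℕ)) : ℕ :=
  ((List.range (π.length - 1)).filter
    (fun i => maxB (π.getD (i + 1) ∅) < minB (π.getD i ∅))).length

def Avoids12 (w : List ℕ) : Prop :=
  ¬ ∃ i j : ℕ, i < j ∧ j < w.length ∧ w.getD i 0 < w.getD j 0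

def Avoids21 (w : List ℕ) : Prop :=
  ¬ ∃ i j : ℕ, i < j ∧ j < w.length ∧ w.getD j 0 < w.getD i 0

def Avoids123 (w : List ℕ) : Prop :=
  ¬ ∃ i j k : ℕ, i < j ∧ j < k ∧ k < w.length ∧
    w.getD i 0 < w.getD j 0 ∧ w.getD j 0 < w.getD k 0

def Avoids132 (w : List ℕ) : Prop :=
  ¬ ∃ i j k : ℕ, i < j ∧ j < k ∧ k < w.length ∧
    w.getD i 0 < w.getD k 0 ∧ w.getD k 0 < w.getD j 0

def Avoids213 (w : List ℕ) : Prop :=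
  ¬ ∃ i j k : ℕ, i < j ∧ j < k ∧ k < w.length ∧
    w.getD j 0 < w.getD i 0 ∧ w.getD i 0 < w.getD k 0

def Avoids312 (w : List ℕ) : Prop :=
  ¬ ∃ i j k : ℕ, i < j ∧ j < k ∧ k < w.length ∧
    w.getD j 0 < w.getD k 0 ∧ w.getD k 0 < w.getD i 0

def Avoids321 (w : List ℕ) : Prop :=
  ¬ ∃ i j k : ℕ, i < j ∧ j < k ∧ k < w.length ∧
    w.getD k 0 < w.getD j 0 ∧ w.getD j 0 < w.getD i 0

/-- reverse-complement of an ordered set partition of `[n]` -/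
def rcomp (n : ℕ) (π : List (Finset ℕ)) : List (Finset ℕ) :=
  (π.map (fun B => B.image (fun a => n + 1 - a))).reverse

/-- `aSeq n` is the number of ordered set partitions of `[n]` word-avoiding
`213` with no min-descents. -/
noncomputable def aSeq (n : ℕ) : ℕ :=
  Nat.card {π : List (Finset ℕ) // IsOSP n π ∧ Avoids213 (word π) ∧ mindes π = 0}

/-!
Let `π = B :: ρ` be a `213`-avoiding ordered set partition of an interval `[a, b]` whose block
minima weakly increase. Then `a ∈ B`, and if `ρ ≠ []` the union of `ρ` is again an interval
`[c, d]` with `a < c`: its minimum `c` is the first letter of `word ρ`, so an element of `B`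
strictly between `c` and `d` would start a `213`. Conversely every block `[a, b] \ [c, d]` with
`a < c ≤ d ≤ b` can be put in front of such a partition of `[c, d]`. So the number `N(a, b)` of
these partitions satisfies `N(a, b) = 1 + ∑_{a < c ≤ d ≤ b} N(c, d)`, and the sums of odd- and
even-indexed Fibonacci numbers show that `N(a, b) = F (2 (b - a) + 1)`.
-/

open Finset Nat

lemma avoids213_iff_sublist {w : List ℕ} :
    Avoids213 w ↔ ∀ x y z : ℕ, [x, y, z].Sublist w → y < x → x < z → False := by
  constructor
  · rintro h x y z hs hyx hxz
    obtain ⟨is, his, hmono⟩ := List.sublist_eq_map_getElem hs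
    match is, his, hmono with
    | [i, j, k], his, hmono =>
      simp only [List.map_cons, List.map_nil, List.cons.injEq, and_true] at his
      obtain ⟨rfl, rfl, rfl⟩ := his
      simp only [List.pairwise_cons, List.mem_cons, List.not_mem_nil, forall_eq_or_imp,
        Fin.lt_def] at hmono
      refine h ⟨i, j, k, by omega, by omega, k.2, ?_⟩
      simpa only [List.getD_eq_getElem _ _ i.2, List.getD_eq_getElem _ _ j.2,
        List.getD_eq_getElem _ _ k.2] using ⟨hyx, hxz⟩
  · rintro h ⟨i, j, k, hij, hjk, hk, h₁, h₂⟩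
    have hs := List.map_getElem_sublist (l := w)
      (is := [⟨i, by omega⟩, ⟨j, by omega⟩, ⟨k, hk⟩]) (by simp [Fin.mk_lt_mk]; omega)
    refine h _ _ _ ?_ h₁ h₂
    simpa [List.getD_eq_getElem, hk, show i < w.length by omega,
      show j < w.length by omega] using hs

lemma Avoids213.sublist {w w' : List ℕ} (hw : Avoids213 w) (h : w'.Sublist w) :
    Avoids213 w' :=
  avoids213_iff_sublist.2 fun x y z hs => avoids213_iff_sublist.1 hw x y z (hs.trans h)

lemma avoids213_append {u v : List ℕ} (hu : u.Pairwise (· < ·)) (hv : Avoids213 v)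
    (hsep : ∀ x ∈ u, (∀ y ∈ v, x < y) ∨ (∀ y ∈ v, y < x)) : Avoids213 (u ++ v) := by
  rw [avoids213_iff_sublist] at hv ⊢
  intro x y z hs hyx hxz
  obtain ⟨r₁, r₂, hxyz, h₁, h₂⟩ := List.sublist_append_iff.1 hs
  match r₁, hxyz with
  | [], hxyz => exact hv x y z (by simpa [hxyz] using h₂) hyx hxz
  | [_], hxyz =>
    simp only [List.cons_append, List.nil_append, List.cons.injEq] at hxyz
    obtain ⟨rfl, rfl⟩ := hxyz
    rcases hsep x (h₁.subset (by simp)) with hlt | hgt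
    · exact absurd (hlt y (h₂.subset (by simp))) (by omega)
    · exact absurd (hgt z (h₂.subset (by simp))) (by omega)
  | _ :: _ :: _, hxyz =>
    simp only [List.cons_append, List.cons.injEq] at hxyz
    obtain ⟨rfl, rfl, -⟩ := hxyz
    have hxy : x < y := List.rel_of_pairwise_cons (hu.sublist h₁) List.mem_cons_self
    omega

lemma not_avoids213_append_cons {u t : List ℕ} {x c z : ℕ} (hx : x ∈ u) (hz : z ∈ t)
    (hcx : c < x) (hxz : x < z) : ¬ Avoids213 (u ++ c :: t) := fun h =>
  avoids213_iff_sublist.1 h x c z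
    ((List.singleton_sublist.2 hx).append ((List.singleton_sublist.2 hz).cons_cons c)) hcx hxz

lemma mem_foldr_union {π : List (Finset ℕ)} {x : ℕ} :
    x ∈ π.foldr (· ∪ ·) ∅ ↔ ∃ B ∈ π, x ∈ B := by
  induction π with
  | nil => simp
  | cons B π ih => simp [ih]

lemma mem_word {π : List (Finset ℕ)} {x : ℕ} : x ∈ word π ↔ ∃ B ∈ π, x ∈ B := by
  simp [word, List.mem_flatten]

lemma word_cons (B : Finset ℕ) (π : List (Finset ℕ)) : word (B :: π) = B.sort ++ word π := rfl

lemma minB_le {B : Finset ℕ} {x : ℕ} (h : x ∈ B) : minB B ≤ x := Nat.sInf_le h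

lemma minB_mem {B : Finset ℕ} (h : B.Nonempty) : minB B ∈ B := by
  exact_mod_cast Nat.sInf_mem (s := (B : Set ℕ)) (by exact_mod_cast h)

lemma exists_word_cons_eq {B : Finset ℕ} (hB : B.Nonempty) (π : List (Finset ℕ)) :
    ∃ t, word (B :: π) = minB B :: t := by
  have hsort : B.sort = minB B :: (B.erase (minB B)).sort := by
    conv_lhs => rw [← insert_erase (minB_mem hB)]
    exact sort_insert _ (fun y hy => minB_le (mem_of_mem_erase hy)) (notMem_erase _ _)
  exact ⟨_, by rw [word_cons, hsort, List.cons_append]⟩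

lemma minB_le_of_mem_foldr_union {B : Finset ℕ} {ρ : List (Finset ℕ)} {x : ℕ}
    (hs : (B :: ρ).Pairwise (fun B C => minB B ≤ minB C))
    (hx : x ∈ (B :: ρ).foldr (· ∪ ·) ∅) : minB B ≤ x := by
  obtain ⟨D, hD, hxD⟩ := mem_foldr_union.1 hx
  rcases List.mem_cons.1 hD with rfl | hD
  · exact minB_le hxD
  · exact (List.rel_of_pairwise_cons hs hD).trans (minB_le hxD)

lemma mindes_eq_zero_iff {π : List (Finset ℕ)} :
    mindes π = 0 ↔ π.Pairwise (fun B C => minB B ≤ minB C) := by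
  rw [← List.pairwise_map (R := (· ≤ ·)), ← List.isChain_iff_pairwise, List.isChain_iff_getElem,
    mindes, List.length_eq_zero_iff, List.filter_eq_nil_iff]
  simp only [List.mem_range, decide_eq_true_eq, not_lt, List.length_map, List.getElem_map]
  constructor
  · intro h i hi
    simpa [List.getD_eq_getElem, hi, show i < π.length by omega] using h i (by omega)
  · intro h i hi
    simpa [List.getD_eq_getElem, show i + 1 < π.length by omega, show i < π.length by omega]
      using h i (by omega)

structure IsAvoidingOSP (a b : ℕ) (π : List (Finset ℕ)) : Prop where
  nonempty : ∀ B ∈ π, B.Nonempty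
  pairwise_disjoint : π.Pairwise Disjoint
  foldr_union : π.foldr (· ∪ ·) ∅ = Icc a b
  avoids : Avoids213 (word π)
  minB_sorted : π.Pairwise (fun B C => minB B ≤ minB C)

lemma isOSP_and_avoids213_and_mindes_iff (n : ℕ) (π : List (Finset ℕ)) :
    (IsOSP n π ∧ Avoids213 (word π) ∧ mindes π = 0) ↔ IsAvoidingOSP 1 n π := by
  rw [mindes_eq_zero_iff]
  exact ⟨fun ⟨⟨h₁, h₂, h₃⟩, h₄, h₅⟩ => ⟨h₁, h₂, h₃, h₄, h₅⟩,
    fun ⟨h₁, h₂, h₃, h₄, h₅⟩ => ⟨⟨h₁, h₂, h₃⟩, h₄, h₅⟩⟩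

namespace IsAvoidingOSP

variable {a b c d : ℕ} {B : Finset ℕ} {ρ : List (Finset ℕ)}

lemma nil (h : b < a) : IsAvoidingOSP a b [] where
  nonempty := by simp
  pairwise_disjoint := List.Pairwise.nil
  foldr_union := by simp [Icc_eq_empty_of_lt h]
  avoids := by rw [avoids213_iff_sublist]; simp [word]
  minB_sorted := List.Pairwise.nil

lemma ne_nil (h : IsAvoidingOSP a b ρ) (hab : a ≤ b) : ρ ≠ [] := by
  rintro rfl
  exact (nonempty_Icc.2 hab).ne_empty h.foldr_union.symm

lemma unique_bounds (h : IsAvoidingOSP a b ρ) (h' : IsAvoidingOSP c d ρ) (hab : a ≤ b) :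
    a = c ∧ b = d := by
  have := congrArg ((↑) : Finset ℕ → Set ℕ) (h.foldr_union.symm.trans h'.foldr_union)
  rwa [coe_Icc, coe_Icc, Set.Icc_eq_Icc_iff hab] at this

lemma subset_Icc (h : IsAvoidingOSP a b ρ) {D : Finset ℕ} (hD : D ∈ ρ) : D ⊆ Icc a b :=
  fun _ hx => h.foldr_union ▸ mem_foldr_union.2 ⟨D, hD, hx⟩

lemma cons (hρ : IsAvoidingOSP c d ρ) (hab : a ≤ b) (hac : a < c) (hdb : d ≤ b) :
    IsAvoidingOSP a b ((Icc a b \ Icc c d) :: ρ) := by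
  have ha : a ∈ Icc a b \ Icc c d := by simp only [mem_sdiff, mem_Icc]; omega
  have hword : ∀ y ∈ word ρ, y ∈ Icc c d := fun y hy => by
    obtain ⟨D, hD, hyD⟩ := mem_word.1 hy
    exact hρ.subset_Icc hD hyD
  refine ⟨?_, ?_, ?_, ?_, ?_⟩
  · simpa using ⟨⟨a, ha⟩, hρ.nonempty⟩
  · exact List.pairwise_cons.2
      ⟨fun D hD => sdiff_disjoint.mono_right (hρ.subset_Icc hD), hρ.pairwise_disjoint⟩
  · rw [List.foldr_cons, hρ.foldr_union, sdiff_union_of_subset (Icc_subset_Icc hac.le hdb)]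
  · refine avoids213_append (sortedLT_sort _).pairwise hρ.avoids fun x hx => ?_
    rw [mem_sort, mem_sdiff, mem_Icc, mem_Icc] at hx
    by_cases hxc : x < c
    · exact .inl fun y hy => by have := mem_Icc.1 (hword y hy); omega
    · exact .inr fun y hy => by have := mem_Icc.1 (hword y hy); omega
  · refine List.pairwise_cons.2 ⟨fun D hD => ?_, hρ.minB_sorted⟩
    have := mem_Icc.1 (hρ.subset_Icc hD (minB_mem (hρ.nonempty D hD)))
    have := minB_le ha
    omega

lemma singleton (hab : a ≤ b) : IsAvoidingOSP a b [Icc a b] := by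
  simpa using (nil (lt_add_one b)).cons hab (Nat.lt_succ_of_le hab) le_rfl

lemma tail (h : IsAvoidingOSP a b (B :: ρ)) (hρ : ρ.foldr (· ∪ ·) ∅ = Icc c d) :
    IsAvoidingOSP c d ρ where
  nonempty D hD := h.nonempty D (List.mem_cons_of_mem B hD)
  pairwise_disjoint := h.pairwise_disjoint.of_cons
  foldr_union := hρ
  avoids := h.avoids.sublist (List.sublist_append_right _ _)
  minB_sorted := h.minB_sorted.of_cons

lemma disjoint_foldr_tail (h : IsAvoidingOSP a b (B :: ρ)) : Disjoint B (ρ.foldr (· ∪ ·) ∅) := by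
  refine disjoint_right.2 fun x hx hxB => ?_
  obtain ⟨D, hD, hxD⟩ := mem_foldr_union.1 hx
  exact disjoint_left.1 (List.rel_of_pairwise_cons h.pairwise_disjoint hD) hxB hxD

lemma left_mem_head (h : IsAvoidingOSP a b (B :: ρ)) : a ∈ B := by
  have hB := h.nonempty B List.mem_cons_self
  have hmin := mem_Icc.1 (h.subset_Icc List.mem_cons_self (minB_mem hB))
  have hle : minB B ≤ a := minB_le_of_mem_foldr_union h.minB_sorted
    (h.foldr_union ▸ mem_Icc.2 ⟨le_rfl, by omega⟩)
  exact le_antisymm hle hmin.1 ▸ minB_mem hB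

lemma foldr_tail_eq_Icc {B₂ : Finset ℕ} (h : IsAvoidingOSP a b (B :: B₂ :: ρ)) :
    ∃ d, (B₂ :: ρ).foldr (· ∪ ·) ∅ = Icc (minB B₂) d := by
  set C := (B₂ :: ρ).foldr (· ∪ ·) ∅
  have hB₂ := h.nonempty B₂ (by simp)
  have hcC : minB B₂ ∈ C := mem_foldr_union.2 ⟨B₂, List.mem_cons_self, minB_mem hB₂⟩
  set c := minB B₂
  set d := C.max' ⟨c, hcC⟩
  have hdC : d ∈ C := C.max'_mem _
  have hCab : C ⊆ Icc a b := fun x hx => h.foldr_union ▸ mem_union_right B hx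
  -- `c` is the first letter of `word (B₂ :: ρ)` and `d` comes later, so `e, c, d` would be a 213
  have hgap : ∀ e ∈ B, e < c ∨ d < e := by
    intro e he
    by_contra! hce
    have hec : e ≠ c := fun hec => disjoint_left.1 h.disjoint_foldr_tail he (hec ▸ hcC)
    have hed : e ≠ d := fun hed => disjoint_left.1 h.disjoint_foldr_tail he (hed ▸ hdC)
    obtain ⟨t, ht⟩ := exists_word_cons_eq hB₂ ρ
    have hdt : d ∈ c :: t := ht ▸ mem_word.2 (mem_foldr_union.1 hdC)
    have hdt : d ∈ t := (List.mem_cons.1 hdt).resolve_left (by omega)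
    refine not_avoids213_append_cons (u := B.sort) (c := c) ((mem_sort _).2 he) hdt
      (by omega) (by omega) ?_
    rw [← ht]
    exact h.avoids
  refine ⟨d, Subset.antisymm (fun x hx => ?_) fun x hx => ?_⟩
  · exact mem_Icc.2 ⟨minB_le_of_mem_foldr_union h.minB_sorted.of_cons hx, C.le_max' x hx⟩
  · have hx' := mem_Icc.1 hx
    have hc := mem_Icc.1 (hCab hcC)
    have hd := mem_Icc.1 (hCab hdC)
    have hxab : x ∈ B ∪ C := by
      change x ∈ (B :: B₂ :: ρ).foldr (· ∪ ·) ∅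
      exact h.foldr_union ▸ mem_Icc.2 ⟨by omega, by omega⟩
    refine (mem_union.1 hxab).resolve_left fun hxB => ?_
    have := hgap x hxB
    omega

lemma exists_eq_cons (h : IsAvoidingOSP a b (B :: ρ)) (hρ : ρ ≠ []) :
    ∃ c d, a < c ∧ c ≤ d ∧ d ≤ b ∧ B = Icc a b \ Icc c d ∧ IsAvoidingOSP c d ρ := by
  obtain ⟨B₂, ρ, rfl⟩ := List.exists_cons_of_ne_nil hρ
  obtain ⟨d, hC⟩ := h.foldr_tail_eq_Icc
  have hcd : minB B₂ ∈ Icc (minB B₂) d :=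
    hC ▸ mem_foldr_union.2 ⟨B₂, List.mem_cons_self, minB_mem (h.nonempty B₂ (by simp))⟩
  have hdisj : Disjoint B (Icc (minB B₂) d) := hC ▸ h.disjoint_foldr_tail
  have hsub : Icc (minB B₂) d ⊆ Icc a b := hC ▸ fun x hx => h.foldr_union ▸ mem_union_right B hx
  have hac : a ≠ minB B₂ := fun hac => disjoint_left.1 hdisj h.left_mem_head (hac ▸ hcd)
  have hd := mem_Icc.1 (hsub (right_mem_Icc.2 (mem_Icc.1 hcd).2))
  have hc := mem_Icc.1 (hsub hcd)
  refine ⟨minB B₂, d, by omega, (mem_Icc.1 hcd).2, hd.2, ?_, h.tail hC⟩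
  rw [← h.foldr_union, List.foldr_cons, hC, union_sdiff_cancel_right hdisj]

end IsAvoidingOSP

lemma sum_range_fib_two_mul_add_one (n : ℕ) : ∑ k ∈ range n, fib (2 * k + 1) = fib (2 * n) := by
  induction n with
  | zero => simp
  | succ n ih => rw [sum_range_succ, ih, mul_add_one, fib_add_two]

lemma sum_range_fib_two_mul_add_two (n : ℕ) :
    ∑ k ∈ range n, fib (2 * k + 2) + 1 = fib (2 * n + 1) := by
  induction n with
  | zero => simp
  | succ n ih =>
    rw [sum_range_succ, add_right_comm, ih, show 2 * (n + 1) + 1 = 2 * n + 1 + 2 by ring,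
      fib_add_two (n := 2 * n + 1)]

lemma sum_Icc_fib (c b : ℕ) : ∑ d ∈ Icc c b, fib (2 * (d - c) + 1) = fib (2 * (b + 1 - c)) := by
  rw [← Ico_add_one_right_eq_Icc, sum_Ico_eq_sum_range]
  simpa using sum_range_fib_two_mul_add_one (b + 1 - c)

lemma sum_Ioc_sum_Icc_fib {a b : ℕ} (hab : a ≤ b) :
    ∑ c ∈ Ioc a b, ∑ d ∈ Icc c b, fib (2 * (d - c) + 1) + 1 = fib (2 * (b - a) + 1) := by
  simp only [sum_Icc_fib]
  rw [← Ico_add_one_add_one_eq_Ioc, sum_Ico_eq_sum_range, add_tsub_add_eq_tsub_right,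
    ← sum_range_fib_two_mul_add_two, ← sum_range_reflect]
  congr 1
  refine sum_congr rfl fun k hk => ?_
  rw [mem_range] at hk
  congr 1
  omega

def tailIntervals (a b : ℕ) : Finset (Σ _ : ℕ, ℕ) := (Ioc a b).sigma fun c => Icc c b

lemma mem_tailIntervals {a b : ℕ} {p : Σ _ : ℕ, ℕ} :
    p ∈ tailIntervals a b ↔ a < p.1 ∧ p.1 ≤ p.2 ∧ p.2 ≤ b := by
  simp only [tailIntervals, mem_sigma, mem_Ioc, mem_Icc]
  omega

def prependBlock {a b : ℕ} (hab : a ≤ b) :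
    Option (Σ p : tailIntervals a b, {ρ // IsAvoidingOSP p.1.1 p.1.2 ρ}) →
      {π // IsAvoidingOSP a b π}
  | none => ⟨[Icc a b], .singleton hab⟩
  | some ⟨⟨⟨c, d⟩, hp⟩, ρ⟩ =>
    ⟨(Icc a b \ Icc c d) :: ρ.1,
      ρ.2.cons hab (mem_tailIntervals.1 hp).1 (mem_tailIntervals.1 hp).2.2⟩

lemma prependBlock_bijective {a b : ℕ} (hab : a ≤ b) : Function.Bijective (prependBlock hab) := by
  refine ⟨?_, ?_⟩
  · rintro (_ | ⟨⟨⟨c, d⟩, hp⟩, ρ, hρ⟩) (_ | ⟨⟨⟨c', d'⟩, hp'⟩, ρ', hρ'⟩) heq <;>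
      simp only [prependBlock, Subtype.mk.injEq, List.cons.injEq] at heq
    · rfl
    · exact absurd heq.2.symm (hρ'.ne_nil (mem_tailIntervals.1 hp').2.1)
    · exact absurd heq.2 (hρ.ne_nil (mem_tailIntervals.1 hp).2.1)
    · obtain ⟨-, rfl⟩ := heq
      obtain ⟨rfl, rfl⟩ := hρ.unique_bounds hρ' (mem_tailIntervals.1 hp).2.1
      rfl
  · rintro ⟨_ | ⟨B, ρ⟩, h⟩
    · exact absurd rfl (h.ne_nil hab)
    · rcases eq_or_ne ρ [] with rfl | hρ
      · refine ⟨none, ?_⟩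
        simpa [prependBlock, eq_comm] using h.foldr_union
      · obtain ⟨c, d, hac, hcd, hdb, rfl, hρ⟩ := h.exists_eq_cons hρ
        exact ⟨some ⟨⟨⟨c, d⟩, mem_tailIntervals.2 ⟨hac, hcd, hdb⟩⟩, ρ, hρ⟩, rfl⟩

theorem card_isAvoidingOSP {a b : ℕ} (hab : a ≤ b) :
    Nat.card {π // IsAvoidingOSP a b π} = fib (2 * (b - a) + 1) := by
  induction hn : b - a using Nat.strong_induction_on generalizing a b with
  | _ n ih =>
  have hcard : ∀ p ∈ tailIntervals a b,
      Nat.card {ρ // IsAvoidingOSP p.1 p.2 ρ} = fib (2 * (p.2 - p.1) + 1) := fun p hp => by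
    have := mem_tailIntervals.1 hp
    exact ih _ (by omega) this.2.1 rfl
  have (p : tailIntervals a b) : Finite {ρ // IsAvoidingOSP p.1.1 p.1.2 ρ} :=
    Nat.finite_of_card_ne_zero (by simp [hcard p.1 p.2])
  rw [← hn, ← Nat.card_eq_of_bijective _ (prependBlock_bijective hab), Finite.card_option,
    Nat.card_sigma, sum_coe_sort (tailIntervals a b) fun p => Nat.card {ρ // IsAvoidingOSP p.1 p.2 ρ},
    sum_congr rfl hcard, tailIntervals, sum_sigma, sum_Ioc_sum_Icc_fib hab]

theorem aSeq_eq_fib {n : ℕ} (hn : 1 ≤ n) : aSeq n = fib (2 * n - 1) := by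
  rw [aSeq, Nat.card_congr (Equiv.subtypeEquivRight (isOSP_and_avoids213_and_mindes_iff n)),
    card_isAvoidingOSP hn]
  congr 1
  omega

lemma fib_add_four (n : ℕ) : fib (n + 4) = 3 * fib (n + 2) - fib n := by
  have h₂ : fib (n + 2) = fib n + fib (n + 1) := fib_add_two
  have h₃ : fib (n + 3) = fib (n + 1) + fib (n + 2) := fib_add_two
  have h₄ : fib (n + 4) = fib (n + 2) + fib (n + 3) := fib_add_two
  omega

theorem stmt17 :
    aSeq 1 = 1 ∧ aSeq 2 = 2 ∧
    (∀ n : ℕ, 3 ≤ n → aSeq n = 3 * aSeq (n - 1) - aSeq (n - 2)) ∧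
    (∀ n : ℕ, 1 ≤ n → aSeq n = Nat.fib (2 * n - 1)) := by
  refine ⟨by rw [aSeq_eq_fib le_rfl]; rfl, by rw [aSeq_eq_fib (by norm_num)]; rfl,
    fun n hn => ?_, fun n hn => aSeq_eq_fib hn⟩
  rw [aSeq_eq_fib (by omega), aSeq_eq_fib (by omega), aSeq_eq_fib (by omega),
    show 2 * n - 1 = 2 * (n - 2) - 1 + 4 by omega,
    show 2 * (n - 1) - 1 = 2 * (n - 2) - 1 + 2 by omega]
  exact fib_add_four _
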